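/- arXiv:2509.21298 — 3 statements merged into one kernel-verified Lean document; each statement's English description precedes it below -/
import Mathlib

section
/- Let l₁, …, l_s be linear forms on ℚⁿ and let d_{ij} (for 1 ≤ i ≤ r, 1 ≤ j ≤ s) be nonnegative integers. Set Pᵢ = ∏ⱼ lⱼ^{d_{ij}} and D = ∑ⱼ maxᵢ d_{ij}. If the ideal J = (P₁, …, Pᵣ) of ℚ[x₁, …, xₙ] has finite codimension, then every homogeneous polynomial of degree at least D − n + 1 lies in J. -/
/-!
Induction on `D`. If some `Pᵢ` is `1` there is nothing to prove, and if all `Pᵢ` vanish the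
quotient is the whole polynomial ring, so `n = 0`. Otherwise pick a nonzero form `ℓ = lⱼ` occurring
in some `Pᵢ`, and let `c` be its largest exponent. Setting `ℓ = 0` eliminates one variable and kills
every `Pᵢ` divisible by `ℓ`, so the surviving generators have `D` smaller by `c ≥ 1` in `n - 1`
variables: by induction a homogeneous `Q` of degree `m ≥ D - n + 1` lies in `J + (ℓ)`. Lowering the
exponents of `ℓ` by one gives an ideal `J' ⊇ J` with `ℓ J' ⊆ J` and `D` smaller by one, so
homogeneous elements of degree `m - 1` are in `J'`. Since `J` is homogeneous, comparing components
of degree `m` in `Q = a + ℓ t` gives `Q ∈ J + ℓ J' ⊆ J`.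
-/

open MvPolynomial Finset

theorem Fintype.sum_add_le_sum_of_le {κ : Type*} [Fintype κ] {f g : κ → ℕ} {c : ℕ} (j₀ : κ)
    (hj₀ : f j₀ + c ≤ g j₀) (h : ∀ j ≠ j₀, f j ≤ g j) : ∑ j, f j + c ≤ ∑ j, g j := by
  classical
  rw [← add_sum_erase _ f (mem_univ j₀), ← add_sum_erase _ g (mem_univ j₀), add_right_comm]
  exact add_le_add hj₀ (sum_le_sum fun j hj => h j (ne_of_mem_erase hj))

section Quotient

variable {R A B : Type*} [CommRing R] [CommRing A] [CommRing B] [Algebra R A] [Algebra R B]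

theorem Ideal.Quotient.finite_of_le {I J : Ideal A} (h : I ≤ J) [Module.Finite R (A ⧸ I)] :
    Module.Finite R (A ⧸ J) :=
  Module.Finite.of_surjective (Ideal.Quotient.factorₐ R h).toLinearMap
    (Ideal.Quotient.factor_surjective h)

theorem Ideal.Quotient.finite_map {f : A →ₐ[R] B} (hf : Function.Surjective f) (I : Ideal A)
    [Module.Finite R (A ⧸ I)] : Module.Finite R (B ⧸ I.map f) :=
  Module.Finite.of_surjective (Ideal.quotientMapₐ (I.map f) f Ideal.le_comap_map).toLinearMap
    (Ideal.quotientMap_surjective (H := Ideal.le_comap_map) hf)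

end Quotient

namespace MvPolynomial

variable {σ R K : Type*} [CommRing R] [Field K]

theorem isEmpty_of_finite [Nontrivial R] [Module.Finite R (MvPolynomial σ R)] : IsEmpty σ := by
  by_contra h
  rw [not_isEmpty_iff] at h
  have : Finite (σ →₀ ℕ) := Module.Finite.finite_basis (basisMonomials σ R)
  exact not_finite (σ →₀ ℕ)

theorem IsHomogeneous.eq_zero_of_isEmpty [IsEmpty σ] {Q : MvPolynomial σ R} {m : ℕ}
    (hQ : Q.IsHomogeneous m) (hm : m ≠ 0) : Q = 0 := by
  by_contra h
  exact hm ((isHomogeneous_of_isEmpty σ R Q).inj_right hQ h).symm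

theorem IsHomogeneous.exists_eq_sum_smul_X [Fintype σ] {ℓ : MvPolynomial σ R}
    (hℓ : ℓ.IsHomogeneous 1) : ∃ c : σ → R, ∑ k, c k • X k = ℓ := by
  rw [← mem_homogeneousSubmodule, homogeneousSubmodule_one_eq_span_X] at hℓ
  exact Submodule.mem_span_range_iff_exists_fun R |>.mp hℓ

theorem exists_surjective_aeval_ker_eq_span_singleton [Fintype σ] [DecidableEq σ]
    {ℓ : MvPolynomial σ K} (hℓ : ℓ.IsHomogeneous 1) (hℓ0 : ℓ ≠ 0) :
    ∃ (k₀ : σ) (g : σ → MvPolynomial {k // k ≠ k₀} K), (∀ k, (g k).IsHomogeneous 1) ∧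
      Function.Surjective (aeval (R := K) g) ∧ RingHom.ker (aeval (R := K) g) = Ideal.span {ℓ} := by
  obtain ⟨c, hc⟩ := hℓ.exists_eq_sum_smul_X
  obtain ⟨k₀, hk₀⟩ : ∃ k, c k ≠ 0 := by
    by_contra! h
    simp [← hc, h] at hℓ0
  set T : MvPolynomial {k // k ≠ k₀} K := ∑ k : {k // k ≠ k₀}, c k • X k
  have hsplit : ℓ = c k₀ • X k₀ + rename Subtype.val T := by
    simp [← hc, T, Fintype.sum_eq_add_sum_subtype_ne _ k₀]
  -- `g` solves `ℓ = 0` for the variable `X k₀`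
  let g : σ → MvPolynomial {k // k ≠ k₀} K := fun k =>
    if h : k = k₀ then -(c k₀)⁻¹ • T else X ⟨k, h⟩
  have hgk₀ : g k₀ = -(c k₀)⁻¹ • T := dif_pos rfl
  have hg : ∀ k : {k // k ≠ k₀}, g k = X k := fun k => dif_neg k.2
  have hsection : ∀ p, aeval g (rename Subtype.val p) = p := by
    have : (aeval g).comp (rename Subtype.val) = AlgHom.id K _ :=
      algHom_ext fun k => by simp [hg]
    exact fun p => congr($this p)
  refine ⟨k₀, g, fun k => ?_, fun p => ⟨_, hsection p⟩, le_antisymm ?_ ?_⟩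
  · by_cases h : k = k₀
    · simp only [g, dif_pos h]
      exact Submodule.smul_mem (homogeneousSubmodule _ K 1) _
        (Submodule.sum_mem _ fun k _ => Submodule.smul_mem _ _ (isHomogeneous_X K k))
    · simp only [g, dif_neg h]
      exact isHomogeneous_X _ _
  · intro f hf
    have hproj : (Ideal.Quotient.mkₐ K (Ideal.span {ℓ})).comp
        ((rename Subtype.val).comp (aeval g)) = Ideal.Quotient.mkₐ K _ := by
      refine algHom_ext fun k => ?_
      simp only [AlgHom.comp_apply, aeval_X, Ideal.Quotient.mkₐ_eq_mk, Ideal.Quotient.eq]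
      by_cases h : k = k₀
      · subst h
        have hinv : C (c k)⁻¹ * C (c k) = (1 : MvPolynomial σ K) := by
          rw [← C_mul, inv_mul_cancel₀ hk₀, C_1]
        refine Ideal.mem_span_singleton.mpr ⟨-C (c k)⁻¹, ?_⟩
        rw [hgk₀, map_smul, hsplit]
        simp only [smul_eq_C_mul, map_neg]
        linear_combination (X k) * hinv
      · simp [g, h]
    have := congr($hproj f)
    rw [AlgHom.comp_apply, AlgHom.comp_apply, RingHom.mem_ker.mp hf, map_zero, map_zero,
      eq_comm, Ideal.Quotient.mkₐ_eq_mk, Ideal.Quotient.eq_zero_iff_mem] at this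
    exact this
  · rw [Ideal.span_le, Set.singleton_subset_iff, SetLike.mem_coe, RingHom.mem_ker, hsplit]
    rw [map_add, map_smul, hsection, aeval_X, hgk₀, smul_smul, mul_neg,
      mul_inv_cancel₀ hk₀, neg_one_smul, neg_add_cancel]

attribute [local instance] gradedAlgebra

theorem homogeneousComponent_mul_of_isHomogeneous_left {p : MvPolynomial σ R} {i : ℕ}
    (hp : p.IsHomogeneous i) (q : MvPolynomial σ R) (n : ℕ) :
    homogeneousComponent n (p * q) = if i ≤ n then p * homogeneousComponent (n - i) q else 0 := by
  simp only [← decomposition.decompose'_apply]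
  exact DirectSum.coe_decompose_mul_of_left_mem (homogeneousSubmodule σ R) n hp

theorem isHomogeneous_span_range {ι : Type*} {P : ι → MvPolynomial σ R} {n : ι → ℕ}
    (hP : ∀ i, (P i).IsHomogeneous (n i)) :
    (Ideal.span (Set.range P)).IsHomogeneous (homogeneousSubmodule σ R) :=
  Ideal.homogeneous_span _ _ (by rintro _ ⟨i, rfl⟩; exact ⟨n i, hP i⟩)

theorem mem_of_mem_sup_span_singleton {J : Ideal (MvPolynomial σ R)}
    (hJ : J.IsHomogeneous (homogeneousSubmodule σ R)) {ℓ Q : MvPolynomial σ R} {m : ℕ}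
    (hℓ : ℓ.IsHomogeneous 1)
    (hcolon : ∀ B : MvPolynomial σ R, B.IsHomogeneous (m - 1) → B ∈ J.colon {ℓ})
    (hQ : Q.IsHomogeneous m) (hQJ : Q ∈ J ⊔ Ideal.span {ℓ}) : Q ∈ J := by
  obtain ⟨a, ha, _, hb, rfl⟩ := Submodule.mem_sup.mp hQJ
  obtain ⟨t, rfl⟩ := Ideal.mem_span_singleton.mp hb
  rw [← homogeneousComponent_eq_self hQ, map_add,
    homogeneousComponent_mul_of_isHomogeneous_left hℓ]
  refine J.add_mem (homogeneousComponent_mem_of_mem hJ ha m) ?_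
  split_ifs
  · have := hcolon _ (homogeneousComponent_isHomogeneous (m - 1) t)
    rwa [Submodule.mem_colon_singleton, smul_eq_mul, mul_comm] at this
  · exact J.zero_mem

end MvPolynomial

section ProdPow

variable {R S : Type*} [CommRing R] [CommRing S] {ι κ : Type*} [Fintype κ]

def prodPowIdeal (l : κ → R) (d : ι → κ → ℕ) : Ideal R :=
  Ideal.span (Set.range fun i => ∏ j, l j ^ d i j)

def sumColMax [Fintype ι] (d : ι → κ → ℕ) : ℕ :=
  ∑ j, univ.sup fun i => d i j

variable {l : κ → R} {d : ι → κ → ℕ}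

theorem prod_pow_mem_prodPowIdeal (i : ι) : ∏ j, l j ^ d i j ∈ prodPowIdeal l d :=
  Ideal.subset_span ⟨i, rfl⟩

theorem prodPowIdeal_eq_top {i : ι} (h : ∀ j, d i j = 0) : prodPowIdeal l d = ⊤ :=
  Ideal.eq_top_of_isUnit_mem _ (prod_pow_mem_prodPowIdeal i) (by simp [h])

theorem prodPowIdeal_eq_bot (h : ∀ i, ∃ j, d i j ≠ 0 ∧ l j = 0) : prodPowIdeal l d = ⊥ := by
  rw [prodPowIdeal, Ideal.span_eq_bot]
  rintro _ ⟨i, rfl⟩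
  obtain ⟨j, hd, hl⟩ := h i
  exact prod_eq_zero (mem_univ j) (by rw [hl, zero_pow hd])

theorem map_prodPowIdeal {F : Type*} [FunLike F R S] [RingHomClass F R S] (f : F) {j₀ : κ}
    (hf : f (l j₀) = 0) :
    (prodPowIdeal l d).map f = prodPowIdeal (f ∘ l) fun i : {i // d i j₀ = 0} => d i := by
  refine le_antisymm (Ideal.map_le_iff_le_comap.mpr <| Ideal.span_le.mpr ?_) (Ideal.span_le.mpr ?_)
  · rintro _ ⟨i, rfl⟩
    by_cases h : d i j₀ = 0
    · simpa [map_prod] using prod_pow_mem_prodPowIdeal (l := f ∘ l) (⟨i, h⟩ : {i // d i j₀ = 0})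
    · simp [map_prod, prod_eq_zero (mem_univ j₀), hf, h]
  · rintro _ ⟨i, rfl⟩
    simpa [map_prod] using Ideal.mem_map_of_mem f (prod_pow_mem_prodPowIdeal (l := l) (d := d) i.1)

theorem sumColMax_subtype_add_le [Fintype ι] (j₀ : κ) :
    sumColMax (fun i : {i // d i j₀ = 0} => d i) + univ.sup (fun i => d i j₀) ≤ sumColMax d := by
  have hmono (j : κ) : (univ.sup fun i : {i // d i j₀ = 0} => d i j) ≤ univ.sup fun i => d i j :=
    Finset.sup_le fun i _ => le_sup (f := fun i => d i j) (mem_univ i.1)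
  refine Fintype.sum_add_le_sum_of_le j₀ ?_ fun j _ => hmono j
  have : (univ.sup fun i : {i // d i j₀ = 0} => d i j₀) = 0 :=
    Nat.eq_zero_of_le_zero (Finset.sup_le fun i _ => i.2.le)
  dsimp only at this ⊢
  omega

variable [DecidableEq κ]

theorem prodPowIdeal_le_sub_single (j₀ : κ) :
    prodPowIdeal l d ≤ prodPowIdeal l fun i => d i - Pi.single j₀ 1 := by
  refine Ideal.span_le.mpr ?_
  rintro _ ⟨i, rfl⟩
  refine Ideal.mem_of_dvd _ ?_ (prod_pow_mem_prodPowIdeal i)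
  exact prod_dvd_prod_of_dvd _ _ fun j _ => pow_dvd_pow _ tsub_le_self

theorem prodPowIdeal_sub_single_le_colon (j₀ : κ) :
    (prodPowIdeal l fun i => d i - Pi.single j₀ 1) ≤ (prodPowIdeal l d).colon {l j₀} := by
  refine Ideal.span_le.mpr ?_
  rintro _ ⟨i, rfl⟩
  rw [SetLike.mem_coe, Submodule.mem_colon_singleton, smul_eq_mul]
  refine Ideal.mem_of_dvd _ ?_ (prod_pow_mem_prodPowIdeal i)
  have hsingle : ∏ j, l j ^ (Pi.single j₀ 1 : κ → ℕ) j = l j₀ := by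
    simp [Pi.single_apply]
  rw [← hsingle, ← prod_mul_distrib]
  exact prod_dvd_prod_of_dvd _ _ fun j _ => by
    rw [← pow_add]; exact pow_dvd_pow _ le_tsub_add

theorem sumColMax_sub_single_add_one_le [Fintype ι] {i₀ : ι} {j₀ : κ} (h : d i₀ j₀ ≠ 0) :
    sumColMax (fun i => d i - Pi.single j₀ 1) + 1 ≤ sumColMax d := by
  have hsub (j : κ) : (univ.sup fun i => (d i - Pi.single j₀ 1 : κ → ℕ) j)
      ≤ (univ.sup fun i => d i j) - (Pi.single j₀ 1 : κ → ℕ) j :=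
    Finset.sup_le fun i _ => tsub_le_tsub_right (le_sup (f := fun i => d i j) (mem_univ i)) _
  have hpos : d i₀ j₀ ≤ univ.sup fun i => d i j₀ := le_sup (f := fun i => d i j₀) (mem_univ i₀)
  refine Fintype.sum_add_le_sum_of_le j₀ ?_ fun j _ => (hsub j).trans tsub_le_self
  have := hsub j₀
  simp only [Pi.single_eq_same] at this
  dsimp only at this ⊢
  omega

end ProdPow

attribute [local instance] MvPolynomial.gradedAlgebra in
theorem isHomogeneous_prodPowIdeal {K σ ι κ : Type*} [Field K] [Fintype κ]
    {l : κ → MvPolynomial σ K} (hl : ∀ j, (l j).IsHomogeneous 1) (d : ι → κ → ℕ) :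
    (prodPowIdeal l d).IsHomogeneous (homogeneousSubmodule σ K) :=
  isHomogeneous_span_range fun i =>
    IsHomogeneous.prod _ _ _ fun j _ => by simpa using (hl j).pow (d i j)

theorem mem_prodPowIdeal_of_isHomogeneous {K σ ι κ : Type*} [Field K] [Fintype σ] [Fintype ι]
    [Fintype κ] {l : κ → MvPolynomial σ K} (hl : ∀ j, (l j).IsHomogeneous 1)
    {d : ι → κ → ℕ} (hfin : FiniteDimensional K (MvPolynomial σ K ⧸ prodPowIdeal l d))
    {D m : ℕ} (hD : sumColMax d ≤ D) (hm : D < m + Fintype.card σ)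
    {Q : MvPolynomial σ K} (hQ : Q.IsHomogeneous m) : Q ∈ prodPowIdeal l d := by
  classical
  induction D using Nat.strong_induction_on generalizing σ ι d m with
  | _ D IH =>
  by_cases hrow : ∃ i, ∀ j, d i j = 0
  · obtain ⟨i, hi⟩ := hrow
    simp [prodPowIdeal_eq_top hi]
  by_cases hcol : ∃ j₀, l j₀ ≠ 0 ∧ ∃ i, d i j₀ ≠ 0
  · obtain ⟨j₀, hlj₀, i₀, hi₀⟩ := hcol
    have hc : 1 ≤ univ.sup fun i => d i j₀ :=
      le_sup_of_le (mem_univ i₀) (Nat.one_le_iff_ne_zero.mpr hi₀)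
    obtain ⟨k₀, g, hg, hsurj, hker⟩ :=
      exists_surjective_aeval_ker_eq_span_singleton (hl j₀) hlj₀
    have hcard : Fintype.card {k // k ≠ k₀} + 1 = Fintype.card σ :=
      Fintype.card_option.symm.trans (Fintype.card_congr (Equiv.optionSubtypeNe k₀))
    have hπ : l j₀ ∈ RingHom.ker (aeval (R := K) g) := hker ▸ Ideal.mem_span_singleton_self _
    have hfin' := Ideal.Quotient.finite_map hsurj (prodPowIdeal l d)
    rw [map_prodPowIdeal _ hπ] at hfin'
    have hmod : Q ∈ prodPowIdeal l d ⊔ Ideal.span {l j₀} := by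
      rw [← hker, ← Ideal.comap_map_of_surjective' _ hsurj, Ideal.mem_comap, map_prodPowIdeal _ hπ]
      have hD' := sumColMax_subtype_add_le (d := d) j₀
      refine IH _ ?_ (fun j => by simpa using (hl j).aeval g hg) hfin' le_rfl ?_
        (by simpa using hQ.aeval g hg) <;> omega
    have hD'' := sumColMax_sub_single_add_one_le hi₀
    refine mem_of_mem_sup_span_singleton (isHomogeneous_prodPowIdeal hl d) (hl j₀)
      (fun B hB => prodPowIdeal_sub_single_le_colon j₀ ?_) hQ hmod
    refine IH _ ?_ hl (Ideal.Quotient.finite_of_le (prodPowIdeal_le_sub_single j₀)) le_rfl ?_ hB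
      <;> omega
  · push Not at hrow hcol
    have hJ : prodPowIdeal l d = ⊥ := prodPowIdeal_eq_bot fun i => by
      obtain ⟨j, hj⟩ := hrow i
      exact ⟨j, hj, by_contra fun h => hj (hcol j h i)⟩
    rw [hJ] at hfin ⊢
    have : Module.Finite K (MvPolynomial σ K) :=
      Module.Finite.equiv (AlgEquiv.quotientBot K _).toLinearEquiv
    have := isEmpty_of_finite (R := K) (σ := σ)
    rw [Fintype.card_eq_zero, add_zero] at hm
    rw [hQ.eq_zero_of_isEmpty (by omega)]
    exact Submodule.zero_mem _

/-- Efimov's lemma.  Let `l₁, …, l_s` be linear forms on `ℚⁿ`,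
`Pᵢ = ∏ⱼ lⱼ^{dᵢⱼ}` and `D = ∑ⱼ maxᵢ dᵢⱼ`.  If the ideal `J = (P₁, …, Pᵣ)` has
finite codimension in `ℚ[x₁, …, xₙ]`, then every homogeneous polynomial of
degree at least `D - n + 1` belongs to `J`. -/
theorem stmt3
    (n r s : ℕ) (l : Fin s → MvPolynomial (Fin n) ℚ)
    (hl : ∀ j, (l j).IsHomogeneous 1)
    (d : Fin r → Fin s → ℕ)
    (P : Fin r → MvPolynomial (Fin n) ℚ)
    (hP : ∀ i, P i = ∏ j, l j ^ d i j)
    (D : ℕ) (hD : D = ∑ j, Finset.univ.sup (fun i => d i j))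
    (hfin : FiniteDimensional ℚ
        (MvPolynomial (Fin n) ℚ ⧸ Ideal.span (Set.range P))) :
    ∀ (m : ℕ) (Q : MvPolynomial (Fin n) ℚ), Q.IsHomogeneous m →
      (D : ℤ) - n + 1 ≤ (m : ℤ) → Q ∈ Ideal.span (Set.range P) := by
  intro m Q hQ hm
  obtain rfl : P = fun i => ∏ j, l j ^ d i j := funext hP
  exact mem_prodPowIdeal_of_isHomogeneous hl hfin hD.ge (by rw [Fintype.card_fin]; omega) hQ
end

section
/- Let S be a ℤ≥0-graded ℚ-algebra with finite-dimensional graded pieces and suppose lim inf_{t→∞} P_t(S)/tⁿ > 0 and lim sup_{t→∞} P_t(S)/tⁿ < ∞, where P_t(S) = ∑_{i ≤ t} dim Sⁱ. Let M be a ℤ-graded S-module with finite-dimensional graded pieces such that lim_{t→∞} (P_t(M) − P_t(S))/tⁿ = 0. Let a ∈ M be a homogeneous element of degree N such that the multiplication map S → M, s ↦ s·a, is injective. Then lim_{t→∞} P_t(M / S·a)/tⁿ = 0. -/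
open Filter

/-- Disjointness of sups of an independent family over disjoint index predicates. -/
lemma aux_disjoint_biSup {R V ι : Type*} [Ring R] [AddCommGroup V] [Module R V]
    {p : ι → Submodule R V} (h : iSupIndep p) {P Q : ι → Prop}
    (hPQ : ∀ i, P i → Q i → False) :
    Disjoint (⨆ i, ⨆ _ : P i, p i) (⨆ i, ⨆ _ : Q i, p i) := by
  classical
  rw [disjoint_iff, eq_bot_iff]
  intro x hx
  obtain ⟨hx1, hx2⟩ := Submodule.mem_inf.mp hx
  rw [Submodule.mem_biSup_iff_exists_dfinsupp] at hx1 hx2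
  obtain ⟨v, hv⟩ := hx1
  obtain ⟨w, hw⟩ := hx2
  have hinj := h.dfinsupp_lsum_injective
  have hvw : v.filter P = w.filter Q := hinj (hv.trans hw.symm)
  have hzero : v.filter P = 0 := by
    ext i
    have hvwi := DFunLike.congr_fun hvw i
    rw [DFinsupp.filter_apply, DFinsupp.filter_apply] at hvwi
    by_cases hPi : P i
    · rw [if_pos hPi, if_neg (fun hQi => hPQ i hPi hQi)] at hvwi
      simp [DFinsupp.filter_apply, hPi, hvwi]
    · simp [DFinsupp.filter_apply, hPi]
  rw [← hv, hzero, map_zero]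
  exact Submodule.zero_mem ⊥

/-- finrank of a finite sup of independent finite-dimensional submodules. -/
lemma aux_finrank_biSup {V : Type*} [AddCommGroup V] [Module ℚ V]
    {p : ℕ → Submodule ℚ V} (h : iSupIndep p) (hfin : ∀ i, FiniteDimensional ℚ (p i))
    (s : Finset ℕ) :
    Module.finrank ℚ ↥(⨆ i ∈ s, p i) = ∑ i ∈ s, Module.finrank ℚ (p i) := by
  classical
  induction s using Finset.induction with
  | empty =>
    have hb : (⨆ i ∈ (∅ : Finset ℕ), p i) = ⊥ := by simp
    rw [hb, finrank_bot, Finset.sum_empty]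
  | @insert a s hns ih =>
    have h1 : (⨆ i ∈ insert a s, p i) = p a ⊔ ⨆ i ∈ s, p i := by
      rw [Finset.iSup_insert]
    have hfs : FiniteDimensional ℚ ↥(⨆ i ∈ s, p i) := by
      rw [iSup_subtype']
      infer_instance
    have hdisj : Disjoint (p a) (⨆ i ∈ s, p i) := h.disjoint_biSup (by exact_mod_cast hns)
    rw [h1, Finset.sum_insert hns, ← ih]
    have := Submodule.finrank_sup_add_finrank_inf_eq (p a) (⨆ i ∈ s, p i)
    rw [hdisj.eq_bot, finrank_bot, add_zero] at this
    exact this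

/-- A finite sup of finite-dimensional submodules is finite-dimensional. -/
lemma aux_fd_biSup {V : Type*} [AddCommGroup V] [Module ℚ V]
    (p : ℕ → Submodule ℚ V) (hfin : ∀ i, FiniteDimensional ℚ (p i))
    (s : Finset ℕ) : FiniteDimensional ℚ ↥(⨆ i ∈ s, p i) := by
  rw [iSup_subtype']
  infer_instance

/-- Core quantitative lemma: if `q` is monotone, `s` grows at most like `C·tⁿ`, and
`(q t + s (t-k) - s t)/tⁿ → 0` with `k > 0`, then `q t / tⁿ → 0`. -/
lemma aux_core (n k : ℕ) (hk : 0 < k) (q s : ℕ → ℕ) (hq : Monotone q)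
    (C : ℝ) (hC : ∀ᶠ t : ℕ in atTop, (s t : ℝ) ≤ C * (t : ℝ) ^ n)
    (hd : Tendsto (fun t : ℕ => ((q t : ℝ) + (s (t - k) : ℝ) - (s t : ℝ)) / (t : ℝ) ^ n)
      atTop (nhds 0)) :
    Tendsto (fun t : ℕ => (q t : ℝ) / (t : ℝ) ^ n) atTop (nhds 0) := by
  rw [NormedAddCommGroup.tendsto_nhds_zero]
  intro ε hε
  obtain ⟨t₂, ht₂⟩ := eventually_atTop.mp hC
  have hC0 : 0 ≤ C := by
    have h1 := ht₂ (t₂ + 1) (Nat.le_succ _)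
    have h2 : (0:ℝ) < ((t₂ + 1 : ℕ) : ℝ) ^ n := by positivity
    nlinarith [Nat.cast_nonneg (α := ℝ) (s (t₂+1))]
  set δ : ℝ := ε / (2 * 2 ^ n) with hδdef
  have hδ : 0 < δ := by positivity
  have hd' := (NormedAddCommGroup.tendsto_nhds_zero.mp hd) δ hδ
  obtain ⟨t₁, ht₁⟩ := eventually_atTop.mp hd'
  set B : ℝ := (2 * C * 2 ^ n / ε + 1) * k with hBdef
  have claim : ∀ t₀ : ℕ, t₁ ≤ t₀ → t₂ ≤ t₀ → 1 ≤ t₀ → k ≤ t₀ →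
      ε * (t₀ : ℝ) ^ n ≤ q t₀ → (t₀ : ℝ) ≤ B := by
    intro t₀ h1 h2 h3 hk0 hq0
    set r : ℕ := t₀ / k with hrdef
    have hrk : r * k ≤ t₀ := Nat.div_mul_le_self t₀ k
    have hrk2 : t₀ < (r + 1) * k := by
      rw [add_mul, one_mul, hrdef, mul_comm]
      have h := Nat.div_add_mod t₀ k
      have hmod := Nat.mod_lt t₀ hk
      omega
    have step : ∀ m : ℕ, m < r →
        (ε / 2) * (t₀ : ℝ) ^ n ≤ (s (t₀ + (m + 1) * k) : ℝ) - (s (t₀ + m * k) : ℝ) := by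
      intro m hm
      set t : ℕ := t₀ + (m + 1) * k with htdef
      have hmk : (m + 1) * k = m * k + k := by rw [add_mul, one_mul]
      have htk : t - k = t₀ + m * k := by rw [htdef, hmk]; omega
      have hmr : (m + 1) * k ≤ r * k := Nat.mul_le_mul_right k hm
      have ht0t : t₀ ≤ t := Nat.le_add_right _ _
      have ht1 : t₁ ≤ t := le_trans h1 ht0t
      have htle : (t : ℝ) ≤ 2 * t₀ := by
        have : t ≤ 2 * t₀ := by rw [htdef]; omega
        exact_mod_cast this
      have htpos : (0:ℝ) < (t : ℝ) ^ n := by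
        have h1t : (1:ℕ) ≤ t := le_trans h3 ht0t
        have : (1:ℝ) ≤ (t:ℝ) := by exact_mod_cast h1t
        positivity
      have hb := ht₁ t ht1
      rw [Real.norm_eq_abs, abs_div, abs_of_pos htpos, div_lt_iff₀ htpos] at hb
      have hb2 : (q t : ℝ) + (s (t - k) : ℝ) - (s t : ℝ) < δ * (t:ℝ)^n :=
        lt_of_le_of_lt (le_abs_self _) hb
      have hqt : ε * (t₀ : ℝ) ^ n ≤ (q t : ℝ) := by
        refine le_trans hq0 ?_
        exact_mod_cast hq ht0t
      have hδt : δ * (t:ℝ)^n ≤ (ε / 2) * (t₀:ℝ)^n := by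
        have h2t : (t:ℝ)^n ≤ (2 * t₀)^n := by
          apply pow_le_pow_left₀ (by positivity) htle
        have : (2 * (t₀:ℝ))^n = 2^n * (t₀:ℝ)^n := by rw [mul_pow]
        rw [this] at h2t
        calc δ * (t:ℝ)^n ≤ δ * (2^n * (t₀:ℝ)^n) := by
              apply mul_le_mul_of_nonneg_left h2t (le_of_lt hδ)
          _ = (ε / 2) * (t₀:ℝ)^n := by
              rw [hδdef]; field_simp
      rw [htk] at hb2
      nlinarith
    have tele : (r : ℝ) * ((ε / 2) * (t₀ : ℝ) ^ n) ≤ (s (t₀ + r * k) : ℝ) - (s t₀ : ℝ) := by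
      have hsum : (s (t₀ + r * k) : ℝ) - (s (t₀ + 0 * k) : ℝ) =
          ∑ m ∈ Finset.range r, ((s (t₀ + (m + 1) * k) : ℝ) - (s (t₀ + m * k) : ℝ)) := by
        rw [Finset.sum_range_sub (fun m => (s (t₀ + m * k) : ℝ))]
      simp only [Nat.zero_mul, Nat.add_zero] at hsum
      rw [hsum]
      calc (r : ℝ) * ((ε / 2) * (t₀ : ℝ) ^ n)
          = ∑ _m ∈ Finset.range r, (ε / 2) * (t₀ : ℝ) ^ n := by
            rw [Finset.sum_const, Finset.card_range, nsmul_eq_mul]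
        _ ≤ _ := Finset.sum_le_sum (fun m hm => step m (Finset.mem_range.mp hm))
    have hup : (s (t₀ + r * k) : ℝ) ≤ C * 2 ^ n * (t₀ : ℝ) ^ n := by
      have h2t : ((t₀ + r * k : ℕ) : ℝ) ^ n ≤ (2 * (t₀:ℝ))^n := by
        apply pow_le_pow_left₀ (by positivity)
        have : t₀ + r * k ≤ 2 * t₀ := by omega
        exact_mod_cast this
      calc (s (t₀ + r * k) : ℝ) ≤ C * ((t₀ + r * k : ℕ) : ℝ) ^ n := ht₂ _ (by omega)
        _ ≤ C * (2 * (t₀:ℝ))^n := mul_le_mul_of_nonneg_left h2t hC0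
        _ = C * 2 ^ n * (t₀ : ℝ) ^ n := by rw [mul_pow]; ring
    have hrbound : (r : ℝ) ≤ 2 * C * 2 ^ n / ε := by
      have htn : (0:ℝ) < (t₀ : ℝ) ^ n := by
        have : (1:ℝ) ≤ (t₀:ℝ) := by exact_mod_cast h3
        positivity
      have hs0 : (0:ℝ) ≤ (s t₀ : ℝ) := Nat.cast_nonneg _
      have : (r : ℝ) * ((ε / 2) * (t₀ : ℝ) ^ n) ≤ C * 2 ^ n * (t₀ : ℝ) ^ n := by
        nlinarith
      rw [le_div_iff₀ hε]
      nlinarith [this, htn, mul_pos htn hε]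
    have : (t₀ : ℝ) < ((r + 1) * k : ℕ) := by exact_mod_cast hrk2
    calc (t₀ : ℝ) ≤ ((r:ℝ) + 1) * k := by push_cast at this ⊢; linarith
      _ ≤ B := by
        rw [hBdef]
        apply mul_le_mul_of_nonneg_right _ (by positivity : (0:ℝ) ≤ (k:ℝ))
        linarith
  rw [eventually_atTop]
  refine ⟨t₁ + t₂ + k + 1 + ⌈B⌉₊ + 1, fun t ht => ?_⟩
  have hqlt : (q t : ℝ) < ε * (t : ℝ) ^ n := by
    by_contra hcon
    push_neg at hcon
    have := claim t (by omega) (by omega) (by omega) (by omega) hcon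
    have hBt : B < (t : ℝ) := by
      calc B ≤ (⌈B⌉₊ : ℝ) := Nat.le_ceil B
        _ < (t : ℝ) := by exact_mod_cast (by omega : ⌈B⌉₊ < t)
    linarith
  have htpos : (0:ℝ) < (t : ℝ) ^ n := by
    have : (1:ℝ) ≤ (t:ℝ) := by exact_mod_cast (by omega : 1 ≤ t)
    positivity
  rw [Real.norm_eq_abs, abs_of_nonneg (by positivity), div_lt_iff₀ htpos]
  exact hqlt

/-- Asymptotic squeeze: let `S` be a `ℤ≥0`-graded `ℚ`-algebra with
`liminf P_t(S)/tⁿ > 0` and `limsup P_t(S)/tⁿ < ∞`, `M` a `ℤ`-graded `S`-module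
with `lim (P_t(M) − P_t(S))/tⁿ = 0`, and `a ∈ M` homogeneous of degree `N` with
`s ↦ s·a` injective.  Then `lim P_t(M/S·a)/tⁿ = 0`. -/
theorem stmt7
    (n : ℕ)
    (A : Type*) [CommRing A] [Algebra ℚ A]
    (𝒜 : ℕ → Submodule ℚ A) [GradedAlgebra 𝒜]
    (hfinS : ∀ i, FiniteDimensional ℚ (𝒜 i))
    (M : Type*) [AddCommGroup M] [Module ℚ M] [Module A M]
    [IsScalarTower ℚ A M]
    (ℳ : ℤ → Submodule ℚ M)
    (hdec : DirectSum.IsInternal ℳ)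
    (hcompat : ∀ (i : ℕ) (j : ℤ), ∀ x ∈ 𝒜 i, ∀ m ∈ ℳ j, x • m ∈ ℳ (i + j))
    (hfinM : ∀ j, FiniteDimensional ℚ (ℳ j))
    -- the counting functions
    (PS : ℕ → ℕ) (hPS : ∀ t, PS t = ∑ i ∈ Finset.range (t + 1),
      Module.finrank ℚ (𝒜 i))
    (PM : ℕ → ℕ) (hPM : ∀ t, PM t = Module.finrank ℚ
      ↥(⨆ i : ℤ, ⨆ _ : i ≤ (t : ℤ), ℳ i))
    -- growth assumptions on `S`
    (hliminf : 0 < Filter.atTop.liminf (fun t : ℕ => (PS t : ℝ) / (t : ℝ) ^ n))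
    (hlimsup : ∃ C : ℝ, ∀ᶠ t : ℕ in atTop, (PS t : ℝ) / (t : ℝ) ^ n ≤ C)
    -- `M` and `S` have the same asymptotics
    (hMS : Tendsto (fun t : ℕ => ((PM t : ℝ) - (PS t : ℝ)) / (t : ℝ) ^ n)
      atTop (nhds 0))
    -- a homogeneous element `a` of degree `N` with injective multiplication
    (N : ℤ) (a : M) (ha : a ∈ ℳ N)
    (hinj : Function.Injective (fun s : A => s • a))
    -- the submodule `S·a` and the counting function of the quotient `M/S·a`
    (Sa : Submodule ℚ M) (hSa : Sa = Submodule.span ℚ {m : M | ∃ s : A, s • a = m})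
    (PQ : ℕ → ℕ) (hPQ : ∀ t, PQ t = Module.finrank ℚ
      ↥(⨆ i : ℤ, ⨆ _ : i ≤ (t : ℤ), (ℳ i).map Sa.mkQ)) :
    Tendsto (fun t : ℕ => (PQ t : ℝ) / (t : ℝ) ^ n) atTop (nhds 0) := by
  classical
  -- the multiplication map
  set φ : A →ₗ[ℚ] M := (LinearMap.toSpanSingleton A M a).restrictScalars ℚ with hφdef
  have hφ : ∀ s : A, φ s = s • a := fun s => rfl
  have hφinj : Function.Injective φ := hinj
  have hSaφ : Sa = LinearMap.range φ := by
    rw [hSa]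
    apply le_antisymm
    · rw [Submodule.span_le]
      rintro m ⟨s, rfl⟩
      exact ⟨s, rfl⟩
    · rintro m ⟨s, rfl⟩
      exact Submodule.subset_span ⟨s, rfl⟩
  -- filtration pieces
  set MLE : ℕ → Submodule ℚ M := fun t => ⨆ i : ℤ, ⨆ _ : i ≤ (t : ℤ), ℳ i with hMLEdef
  set SLE : ℤ → Submodule ℚ A := fun c => ⨆ i : ℕ, ⨆ _ : (i : ℤ) ≤ c, 𝒜 i with hSLEdef
  have hPM' : ∀ t, PM t = Module.finrank ℚ (MLE t) := hPM
  have hMLEmono : Monotone MLE := by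
    intro t t' h
    exact biSup_mono fun i hi => le_trans hi (by exact_mod_cast h)
  have hindM : iSupIndep ℳ := hdec.submodule_iSupIndep
  have hindS : iSupIndep 𝒜 := (DirectSum.Decomposition.isInternal 𝒜).submodule_iSupIndep
  have hPSmono : Monotone PS := by
    intro t t' h
    rw [hPS, hPS]
    apply Finset.sum_le_sum_of_subset
    exact Finset.range_subset_range.mpr (by omega)
  -- finrank of SLE
  have hSLEbot : ∀ c : ℤ, c < 0 → SLE c = ⊥ := by
    intro c hc
    rw [eq_bot_iff]
    exact iSup_le fun i => iSup_le fun hi => absurd hi (by omega)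
  have hSLErange : ∀ c : ℤ, 0 ≤ c → SLE c = ⨆ i ∈ Finset.range (c.toNat + 1), 𝒜 i := by
    intro c hc
    have hiff : ∀ i : ℕ, ((i : ℤ) ≤ c) ↔ (i ∈ Finset.range (c.toNat + 1)) := by
      intro i
      rw [Finset.mem_range]
      omega
    apply le_antisymm
    · exact biSup_mono fun i hi => (hiff i).mp hi
    · exact biSup_mono fun i hi => (hiff i).mpr hi
  have hSLEfr : ∀ c : ℤ, 0 ≤ c → Module.finrank ℚ (SLE c) = PS c.toNat := by
    intro c hc
    rw [hSLErange c hc, aux_finrank_biSup hindS hfinS, hPS]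
  have hSLEfd : ∀ c : ℤ, FiniteDimensional ℚ (SLE c) := by
    intro c
    rcases lt_or_ge c 0 with hc | hc
    · rw [hSLEbot c hc]
      infer_instance
    · rw [hSLErange c hc]
      exact aux_fd_biSup _ hfinS _
  -- the image of SLE lands in MLE
  have hmaple : ∀ t : ℕ, (SLE ((t : ℤ) - N)).map φ ≤ MLE t := by
    intro t
    rw [hSLEdef, Submodule.map_iSup]
    apply iSup_le
    intro i
    rw [Submodule.map_iSup]
    apply iSup_le
    intro hi
    rintro x ⟨y, hy, rfl⟩
    have hm : y • a ∈ ℳ ((i : ℤ) + N) := hcompat i N y hy a ha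
    have hle : ℳ ((i : ℤ) + N) ≤ MLE t :=
      le_iSup_of_le ((i : ℤ) + N) (le_iSup_of_le (by omega) le_rfl)
    exact hle hm
  -- the key identity for the graded pieces of S·a
  have hkeyinf : ∀ t : ℕ, (LinearMap.range φ) ⊓ MLE t = (SLE ((t : ℤ) - N)).map φ := by
    intro t
    apply le_antisymm
    · rintro x hx
      obtain ⟨hx1, hx2⟩ := Submodule.mem_inf.mp hx
      obtain ⟨s, rfl⟩ := hx1
      have hsum := DirectSum.sum_support_decompose 𝒜 s
      set F := (DirectSum.decompose 𝒜 s).support with hF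
      set s1 := ∑ i ∈ F.filter (fun i : ℕ => (i : ℤ) ≤ (t : ℤ) - N),
        ((DirectSum.decompose 𝒜 s) i : A) with hs1
      set s2 := ∑ i ∈ F.filter (fun i : ℕ => ¬((i : ℤ) ≤ (t : ℤ) - N)),
        ((DirectSum.decompose 𝒜 s) i : A) with hs2
      have hs12 : s1 + s2 = s := by
        rw [hs1, hs2, Finset.sum_filter_add_sum_filter_not]
        exact hsum
      have hs1mem : s1 ∈ SLE ((t : ℤ) - N) := by
        apply Submodule.sum_mem
        intro i hi
        rw [Finset.mem_filter] at hi
        have hle : 𝒜 i ≤ SLE ((t : ℤ) - N) :=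
          le_iSup_of_le i (le_iSup_of_le hi.2 le_rfl)
        exact hle (SetLike.coe_mem _)
      have h1 : φ s1 ∈ (SLE ((t : ℤ) - N)).map φ := Submodule.mem_map_of_mem hs1mem
      have h1M : φ s1 ∈ MLE t := hmaple t h1
      have h2G : φ s2 ∈ ⨆ j : ℤ, ⨆ _ : (t : ℤ) < j, ℳ j := by
        rw [hs2, map_sum]
        apply Submodule.sum_mem
        intro i hi
        rw [Finset.mem_filter] at hi
        have hm : ((DirectSum.decompose 𝒜 s) i : A) • a ∈ ℳ ((i : ℤ) + N) :=
          hcompat i N _ (SetLike.coe_mem _) a ha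
        have hle : ℳ ((i : ℤ) + N) ≤ ⨆ j : ℤ, ⨆ _ : (t : ℤ) < j, ℳ j := by
          have h2 := hi.2
          exact le_iSup_of_le ((i : ℤ) + N) (le_iSup_of_le (by omega) le_rfl)
        exact hle hm
      have h2M : φ s2 ∈ MLE t := by
        have heq : φ s2 = φ s - φ s1 := by
          rw [← hs12, map_add]
          abel
        rw [heq]
        exact Submodule.sub_mem _ hx2 h1M
      have hdisj : Disjoint (MLE t) (⨆ j : ℤ, ⨆ _ : (t : ℤ) < j, ℳ j) :=
        aux_disjoint_biSup hindM (fun j hj hj' => absurd hj (not_le.mpr hj'))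
      have hz : φ s2 = 0 := Submodule.disjoint_def.mp hdisj (φ s2) h2M h2G
      have heq2 : φ s = φ s1 := by
        rw [← hs12, map_add, hz, add_zero]
      rw [heq2]
      exact h1
    · refine le_inf ?_ (hmaple t)
      rintro x ⟨s', _, rfl⟩
      exact ⟨s', rfl⟩
  -- case on finite-dimensionality of the filtration
  by_cases hfd : ∀ t : ℕ, FiniteDimensional ℚ (MLE t)
  · -- the good case
    have hQmap : ∀ t : ℕ, (⨆ i : ℤ, ⨆ _ : i ≤ (t : ℤ), (ℳ i).map Sa.mkQ)
        = (MLE t).map Sa.mkQ := by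
      intro t
      rw [hMLEdef, Submodule.map_iSup]
      apply iSup_congr
      intro i
      rw [Submodule.map_iSup]
    have hPQ' : ∀ t, PQ t = Module.finrank ℚ ((MLE t).map Sa.mkQ) := by
      intro t
      rw [hPQ, hQmap]
    -- rank–nullity
    have hrank : ∀ t : ℕ, PQ t + Module.finrank ℚ ↥(Sa ⊓ MLE t) = PM t := by
      intro t
      haveI := hfd t
      set f : MLE t →ₗ[ℚ] M ⧸ Sa := Sa.mkQ.comp (MLE t).subtype with hfdef
      have hr : LinearMap.range f = (MLE t).map Sa.mkQ := by
        rw [hfdef, LinearMap.range_comp, Submodule.range_subtype]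
      have hker : LinearMap.ker f = Submodule.comap (MLE t).subtype (Sa ⊓ MLE t) := by
        rw [hfdef, LinearMap.ker_comp, Submodule.ker_mkQ, Submodule.comap_inf,
          Submodule.comap_subtype_self, inf_top_eq]
      have h0 := LinearMap.finrank_range_add_finrank_ker f
      rw [hr, hker] at h0
      have e := Submodule.comapSubtypeEquivOfLe (inf_le_right : Sa ⊓ MLE t ≤ MLE t)
      rw [e.finrank_eq] at h0
      rw [hPQ' t, hPM' t]
      exact h0
    -- identify the rank of Sa ⊓ MLE t
    set g : ℕ → ℕ := fun t => if 0 ≤ (t : ℤ) - N then PS ((t : ℤ) - N).toNat else 0 with hgdef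
    have hSinf : ∀ t : ℕ, Module.finrank ℚ ↥(Sa ⊓ MLE t) = g t := by
      intro t
      rw [hSaφ, hkeyinf t]
      simp only [hgdef]
      rcases le_or_gt 0 ((t : ℤ) - N) with hc | hc
      · rw [if_pos hc]
        rw [← (Submodule.equivMapOfInjective φ hφinj (SLE ((t : ℤ) - N))).finrank_eq]
        exact hSLEfr _ hc
      · rw [if_neg (not_le.mpr hc), hSLEbot _ hc, Submodule.map_bot, finrank_bot]
    have hkey : ∀ t : ℕ, PM t = PQ t + g t := by
      intro t
      rw [← hrank t, hSinf t]
    -- PQ is monotone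
    have hPQmono : Monotone PQ := by
      intro t t' h
      rw [hPQ' t, hPQ' t']
      haveI := hfd t'
      haveI : Module.Finite ℚ ((MLE t').map Sa.mkQ) := Module.Finite.map _ _
      exact Submodule.finrank_mono (Submodule.map_mono (hMLEmono h))
    -- split on the sign of N
    rcases le_or_gt N 0 with hN | hN
    · -- N ≤ 0 : direct squeeze
      have hbound : ∀ᶠ t : ℕ in atTop, (PQ t : ℝ) / (t : ℝ) ^ n
          ≤ ((PM t : ℝ) - (PS t : ℝ)) / (t : ℝ) ^ n := by
        rw [eventually_atTop]
        refine ⟨1, fun t ht => ?_⟩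
        have htpos : (0:ℝ) < (t : ℝ) ^ n := by
          have : (1:ℝ) ≤ (t:ℝ) := by exact_mod_cast ht
          positivity
        have hg : PS t ≤ g t := by
          simp only [hgdef]
          have h0 : 0 ≤ (t : ℤ) - N := by omega
          rw [if_pos h0]
          exact hPSmono (by omega)
        have : (PQ t : ℝ) ≤ (PM t : ℝ) - (PS t : ℝ) := by
          have := hkey t
          have hg' : (PS t : ℝ) ≤ (g t : ℝ) := by exact_mod_cast hg
          have hkey' : (PM t : ℝ) = (PQ t : ℝ) + (g t : ℝ) := by exact_mod_cast this
          linarith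
        exact (div_le_div_iff_of_pos_right htpos).mpr this
      apply squeeze_zero' (Filter.Eventually.of_forall ?_) hbound hMS
      intro t
      positivity
    · -- N > 0 : use the core lemma
      set k : ℕ := N.toNat with hkdef
      have hk : 0 < k := by omega
      obtain ⟨C, hC⟩ := hlimsup
      have hC' : ∀ᶠ t : ℕ in atTop, (PS t : ℝ) ≤ C * (t : ℝ) ^ n := by
        filter_upwards [hC, eventually_ge_atTop 1] with t h1 h2
        have htpos : (0:ℝ) < (t : ℝ) ^ n := by
          have : (1:ℝ) ≤ (t:ℝ) := by exact_mod_cast h2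
          positivity
        rw [div_le_iff₀ htpos] at h1
        exact h1
      have heq : (fun t : ℕ => ((PM t : ℝ) - (PS t : ℝ)) / (t : ℝ) ^ n)
          =ᶠ[atTop] (fun t : ℕ =>
            ((PQ t : ℝ) + (PS (t - k) : ℝ) - (PS t : ℝ)) / (t : ℝ) ^ n) := by
        rw [EventuallyEq, eventually_atTop]
        refine ⟨k, fun t ht => ?_⟩
        have hgt : g t = PS (t - k) := by
          simp only [hgdef]
          have h0 : 0 ≤ (t : ℤ) - N := by omega
          rw [if_pos h0]
          congr 1
          omega
        have : (PM t : ℝ) = (PQ t : ℝ) + (PS (t - k) : ℝ) := by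
          rw [← hgt]
          exact_mod_cast hkey t
        rw [this]
      exact aux_core n k hk PQ PS hPQmono C hC' (hMS.congr' heq)
  · -- the degenerate case: contradiction with hliminf
    exfalso
    push_neg at hfd
    obtain ⟨t₀, ht₀⟩ := hfd
    have hPM0 : ∀ t : ℕ, t₀ ≤ t → PM t = 0 := by
      intro t ht
      rw [hPM' t]
      apply Module.finrank_of_infinite_dimensional
      intro hcon
      exact ht₀ (Submodule.finiteDimensional_of_le (hMLEmono ht))
    have heq : (fun t : ℕ => ((PM t : ℝ) - (PS t : ℝ)) / (t : ℝ) ^ n)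
        =ᶠ[atTop] (fun t : ℕ => -((PS t : ℝ) / (t : ℝ) ^ n)) := by
      rw [EventuallyEq, eventually_atTop]
      refine ⟨t₀, fun t ht => ?_⟩
      rw [hPM0 t ht]
      push_cast
      ring
    have h2 : Tendsto (fun t : ℕ => -((PS t : ℝ) / (t : ℝ) ^ n)) atTop (nhds 0) :=
      hMS.congr' heq
    have h3 : Tendsto (fun t : ℕ => (PS t : ℝ) / (t : ℝ) ^ n) atTop (nhds 0) := by
      simpa using h2.neg
    rw [h3.liminf_eq] at hliminf
    exact lt_irrefl 0 hliminf
end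

section
/- Let W be a finite group acting linearly on a finite-dimensional real vector space F, and let 𝒜 be a finite W-stable central hyperplane arrangement in F whose complement is nonempty. For chambers σ, τ of 𝒜 (connected components of the complement of the union of the hyperplanes), let d(σ, τ) be the number of hyperplanes of 𝒜 separating σ from τ. Fix a chamber σ. Then the function sgn : W → {±1}, sgn(g) = (−1)^{d(σ, g·σ)}, is a group homomorphism and is independent of the choice of chamber σ. -/
open LinearMap

/-- The complement of a set of hyperplanes. -/
def arrComplement {F : Type*} [AddCommGroup F] [Module ℝ F]
    (Hyp : Set (Submodule ℝ F)) : Set F :=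
  {x | ∀ h ∈ Hyp, x ∉ h}

/-- A chamber of the arrangement: a connected component of the complement. -/
def IsChamber {F : Type*} [NormedAddCommGroup F] [NormedSpace ℝ F]
    (Hyp : Set (Submodule ℝ F)) (σ : Set F) : Prop :=
  ∃ x ∈ arrComplement Hyp, σ = connectedComponentIn (arrComplement Hyp) x

/-- The hyperplane `h` separates `σ` and `τ`: they lie on opposite open sides. -/
def SeparatesSets {F : Type*} [AddCommGroup F] [Module ℝ F]
    (h : Submodule ℝ F) (σ τ : Set F) : Prop :=
  ∃ l : F →ₗ[ℝ] ℝ, h = LinearMap.ker l ∧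
    (∀ x ∈ σ, 0 < l x) ∧ (∀ y ∈ τ, l y < 0)

/-- `d(σ, τ)`: the number of hyperplanes of the arrangement separating the
chambers `σ` and `τ`. -/
noncomputable def sepCount {F : Type*} [AddCommGroup F] [Module ℝ F]
    (Hyp : Set (Submodule ℝ F)) (σ τ : Set F) : ℕ :=
  Set.ncard {h | h ∈ Hyp ∧ SeparatesSets h σ τ}

section Aux

open scoped Classical

variable {F : Type*} [NormedAddCommGroup F] [NormedSpace ℝ F] [FiniteDimensional ℝ F]

/-- A continuous linear functional with no zeros on a preconnected set has constant sign. -/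
lemma constSign {s : Set F} (hs : IsPreconnected s) (l : F →ₗ[ℝ] ℝ)
    (h0 : ∀ x ∈ s, l x ≠ 0) :
    (∀ x ∈ s, 0 < l x) ∨ (∀ x ∈ s, l x < 0) := by
  by_contra hc
  push_neg at hc
  obtain ⟨⟨x, hx, hlx⟩, y, hy, hly⟩ := hc
  have h1 : l x < 0 := lt_of_le_of_ne hlx (h0 x hx)
  have h2 : 0 < l y := lt_of_le_of_ne hly (Ne.symm (h0 y hy))
  have hcont : ContinuousOn l s := l.continuous_of_finiteDimensional.continuousOn
  obtain ⟨z, hz, hz0⟩ := hs.intermediate_value hx hy hcont ⟨h1.le, h2.le⟩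
  exact h0 z hz hz0

/-- Two functionals with the same kernel cannot disagree in sign on the positive
side of that kernel. -/
lemma sameSide (l l' : F →ₗ[ℝ] ℝ) (hker : ker l' = ker l)
    {x y : F} (hx : 0 < l x) (hy : 0 < l y) (h'x : 0 < l' x) : 0 < l' y := by
  have hconv : Convex ℝ (l ⁻¹' Set.Ioi 0) := (convex_Ioi (0 : ℝ)).linear_preimage l
  have hpre : IsPreconnected (l ⁻¹' Set.Ioi 0) := hconv.isPreconnected
  have h0 : ∀ z ∈ l ⁻¹' Set.Ioi 0, l' z ≠ 0 := by
    intro z hz hz0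
    have hzk : z ∈ ker l := hker ▸ mem_ker.mpr hz0
    exact absurd (mem_ker.mp hzk) (ne_of_gt hz)
  rcases constSign hpre l' h0 with hpos | hneg
  · exact hpos y hy
  · exact absurd h'x (not_lt.mpr (hneg x hx).le)

lemma ker_neg' (l : F →ₗ[ℝ] ℝ) : ker (-l) = ker l := by
  ext z; simp [mem_ker]

/-- Choice of a defining functional for each hyperplane of the arrangement. -/
noncomputable def pickL (L : Finset (F →ₗ[ℝ] ℝ)) (h : Submodule ℝ F) : F →ₗ[ℝ] ℝ :=
  if hh : ∃ l ∈ L, h = ker l then hh.choose else 0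

lemma pickL_spec {L : Finset (F →ₗ[ℝ] ℝ)} {h : Submodule ℝ F}
    (hh : ∃ l ∈ L, h = ker l) : pickL L h ∈ L ∧ h = ker (pickL L h) := by
  rw [pickL, dif_pos hh]
  exact hh.choose_spec

/-- The sign of the chosen functional at a point. -/
noncomputable def sgnAt (L : Finset (F →ₗ[ℝ] ℝ)) (x : F) (h : Submodule ℝ F) : ℤ :=
  if 0 < pickL L h x then 1 else -1

lemma sgnAt_cases (L : Finset (F →ₗ[ℝ] ℝ)) (x : F) (h : Submodule ℝ F) :
    sgnAt L x h = 1 ∨ sgnAt L x h = -1 := by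
  unfold sgnAt; split <;> simp

lemma sgnAt_mul_self (L : Finset (F →ₗ[ℝ] ℝ)) (x : F) (h : Submodule ℝ F) :
    sgnAt L x h * sgnAt L x h = 1 := by
  rcases sgnAt_cases L x h with h1 | h1 <;> rw [h1] <;> norm_num

/-- The separation of two preconnected sets avoiding a hyperplane is detected by
the signs of the chosen functional at any pair of points. -/
lemma sep_iff (L : Finset (F →ₗ[ℝ] ℝ)) {h : Submodule ℝ F}
    (hh : ∃ l ∈ L, h = ker l)
    {σ τ : Set F} (hσc : IsPreconnected σ) (hτc : IsPreconnected τ)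
    (hσh : ∀ z ∈ σ, z ∉ h) (hτh : ∀ z ∈ τ, z ∉ h)
    {x y : F} (hx : x ∈ σ) (hy : y ∈ τ) :
    SeparatesSets h σ τ ↔ sgnAt L x h ≠ sgnAt L y h := by
  obtain ⟨-, hkr⟩ := pickL_spec hh
  have hnzσ : ∀ z ∈ σ, pickL L h z ≠ 0 := by
    intro z hz h0
    exact hσh z hz (by rw [hkr]; exact mem_ker.mpr h0)
  have hnzτ : ∀ z ∈ τ, pickL L h z ≠ 0 := by
    intro z hz h0
    exact hτh z hz (by rw [hkr]; exact mem_ker.mpr h0)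
  constructor
  · rintro ⟨l', hker', hpos, hneg⟩ heq
    have hker_eq : ker l' = ker (pickL L h) := hker'.symm.trans hkr
    by_cases hx0 : 0 < pickL L h x <;> by_cases hy0 : 0 < pickL L h y
    · have := sameSide (pickL L h) l' hker_eq hx0 hy0 (hpos x hx)
      exact absurd this (not_lt.mpr (hneg y hy).le)
    · simp [sgnAt, hx0, hy0] at heq
    · simp [sgnAt, hx0, hy0] at heq
    · have hx1 : 0 < (-(pickL L h)) x := by
        have := lt_of_le_of_ne (not_lt.mp hx0) (hnzσ x hx)
        simpa using this
      have hy1 : 0 < (-(pickL L h)) y := by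
        have := lt_of_le_of_ne (not_lt.mp hy0) (hnzτ y hy)
        simpa using this
      have hker_eq' : ker l' = ker (-(pickL L h)) := hker_eq.trans (ker_neg' _).symm
      have := sameSide (-(pickL L h)) l' hker_eq' hx1 hy1 (hpos x hx)
      exact absurd this (not_lt.mpr (hneg y hy).le)
  · intro hne
    rcases constSign hσc (pickL L h) hnzσ with hσp | hσn <;>
      rcases constSign hτc (pickL L h) hnzτ with hτp | hτn
    · exact absurd (by simp [sgnAt, hσp x hx, hτp y hy]) hne
    · exact ⟨pickL L h, hkr, hσp, hτn⟩
    · refine ⟨-(pickL L h), by rw [ker_neg']; exact hkr, ?_, ?_⟩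
      · intro z hz; simpa using hσn z hz
      · intro z hz; simpa using hτp z hz
    · exact absurd
        (by simp [sgnAt, not_lt.mpr (hσn x hx).le, not_lt.mpr (hτn y hy).le]) hne

/-- The arrangement as a finset. -/
noncomputable def HypF (L : Finset (F →ₗ[ℝ] ℝ)) : Finset (Submodule ℝ F) :=
  L.image fun l => ker l

lemma mem_HypF {L : Finset (F →ₗ[ℝ] ℝ)} {h : Submodule ℝ F} :
    h ∈ HypF L ↔ ∃ l ∈ L, h = ker l := by
  simp [HypF, eq_comm]

/-- The product of signs pairing. -/
noncomputable def Dprod (L : Finset (F →ₗ[ℝ] ℝ)) (x y : F) : ℤ :=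
  ∏ h ∈ HypF L, sgnAt L x h * sgnAt L y h

lemma Dprod_self (L : Finset (F →ₗ[ℝ] ℝ)) (x : F) : Dprod L x x = 1 :=
  Finset.prod_eq_one fun h _ => sgnAt_mul_self L x h

lemma Dprod_trans (L : Finset (F →ₗ[ℝ] ℝ)) (x y z : F) :
    Dprod L x y * Dprod L y z = Dprod L x z := by
  unfold Dprod
  rw [← Finset.prod_mul_distrib]
  refine Finset.prod_congr rfl fun h _ => ?_
  have h2 := sgnAt_mul_self L y h
  linear_combination sgnAt L x h * sgnAt L z h * h2

/-- A preconnected subset of the complement of the arrangement, with a marked point. -/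
def PreCh (Hyp : Set (Submodule ℝ F)) (σ : Set F) : Prop :=
  IsPreconnected σ ∧ σ ⊆ arrComplement Hyp

/-- The sign formula: `(-1)^{d(σ,τ)}` equals the product of sign comparisons at
any pair of points. -/
lemma sign_eq (L : Finset (F →ₗ[ℝ] ℝ)) (Hyp : Set (Submodule ℝ F))
    (hHyp : Hyp = {h | ∃ l ∈ L, h = ker l})
    {σ τ : Set F} (hσ : PreCh Hyp σ) (hτ : PreCh Hyp τ)
    {x y : F} (hx : x ∈ σ) (hy : y ∈ τ) :
    (-1 : ℤ) ^ sepCount Hyp σ τ = Dprod L x y := by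
  have hmem : ∀ h, h ∈ Hyp ↔ h ∈ HypF L := by
    intro h; rw [hHyp, mem_HypF]; rfl
  have hset : {h | h ∈ Hyp ∧ SeparatesSets h σ τ} =
      ↑((HypF L).filter fun h => SeparatesSets h σ τ) := by
    ext h
    simp only [Set.mem_setOf_eq, Finset.coe_filter, hmem]
  rw [sepCount, hset, Set.ncard_coe_finset, Dprod]
  have key : ∀ h ∈ HypF L,
      (if SeparatesSets h σ τ then (-1 : ℤ) else 1) = sgnAt L x h * sgnAt L y h := by
    intro h hh
    have hhL : ∃ l ∈ L, h = ker l := mem_HypF.mp hh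
    have hσh : ∀ z ∈ σ, z ∉ h := fun z hz => hσ.2 hz h ((hmem h).mpr hh)
    have hτh : ∀ z ∈ τ, z ∉ h := fun z hz => hτ.2 hz h ((hmem h).mpr hh)
    have hiff := sep_iff L hhL hσ.1 hτ.1 hσh hτh hx hy
    by_cases hs : SeparatesSets h σ τ
    · rw [if_pos hs]
      have hne := hiff.mp hs
      rcases sgnAt_cases L x h with h1 | h1 <;> rcases sgnAt_cases L y h with h2 | h2
      · exact absurd (h1.trans h2.symm) hne
      · rw [h1, h2]; norm_num
      · rw [h1, h2]; norm_num
      · exact absurd (h1.trans h2.symm) hne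
    · rw [if_neg hs]
      have heq : sgnAt L x h = sgnAt L y h := not_not.mp fun hc => hs (hiff.mpr hc)
      rw [heq]; exact (sgnAt_mul_self L y h).symm
  rw [← Finset.prod_congr rfl key, Finset.prod_ite, Finset.prod_const, Finset.prod_const,
    one_pow, mul_one]

/-- Separation is transported by linear equivalences. -/
lemma sep_map (e : F ≃ₗ[ℝ] F) {h : Submodule ℝ F} {σ τ : Set F}
    (hs : SeparatesSets h σ τ) :
    SeparatesSets (Submodule.map (e : F →ₗ[ℝ] F) h) (⇑e '' σ) (⇑e '' τ) := by
  obtain ⟨l, hker, hp, hn⟩ := hs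
  refine ⟨l.comp (e.symm : F →ₗ[ℝ] F), ?_, ?_, ?_⟩
  · rw [hker, Submodule.map_equiv_eq_comap_symm, ker_comp]
  · rintro _ ⟨x, hxσ, rfl⟩
    simpa using hp x hxσ
  · rintro _ ⟨y, hyτ, rfl⟩
    simpa using hn y hyτ

lemma symm_image_image' (e : F ≃ₗ[ℝ] F) (s : Set F) : ⇑e.symm '' (⇑e '' s) = s := by
  rw [Set.image_image]
  simp

lemma map_symm_map' (e : F ≃ₗ[ℝ] F) (h : Submodule ℝ F) :
    Submodule.map (e.symm : F →ₗ[ℝ] F) (Submodule.map (e : F →ₗ[ℝ] F) h) = h := by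
  ext z
  constructor
  · rintro ⟨_, ⟨w, hw, rfl⟩, rfl⟩
    simpa using hw
  · intro hz
    exact ⟨e z, ⟨z, hz, rfl⟩, by simp⟩

lemma sep_map_iff (e : F ≃ₗ[ℝ] F) (h : Submodule ℝ F) (σ τ : Set F) :
    SeparatesSets (Submodule.map (e : F →ₗ[ℝ] F) h) (⇑e '' σ) (⇑e '' τ) ↔
      SeparatesSets h σ τ := by
  constructor
  · intro hs
    have := sep_map e.symm hs
    rwa [map_symm_map', symm_image_image', symm_image_image'] at this
  · exact sep_map e

/-- On a finite stable arrangement, the action of an equivalence on hyperplanes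
is surjective. -/
lemma map_surjOn (L : Finset (F →ₗ[ℝ] ℝ)) (Hyp : Set (Submodule ℝ F))
    (hHyp : Hyp = {h | ∃ l ∈ L, h = ker l}) (e : F ≃ₗ[ℝ] F)
    (hstab : ∀ h ∈ Hyp, Submodule.map (e : F →ₗ[ℝ] F) h ∈ Hyp) :
    ∀ h' ∈ Hyp, ∃ h ∈ Hyp, Submodule.map (e : F →ₗ[ℝ] F) h = h' := by
  have hfin : Hyp.Finite := by
    have : Hyp = ↑(HypF L) := by
      ext h; rw [hHyp, Finset.mem_coe, mem_HypF]; rfl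
    rw [this]; exact (HypF L).finite_toSet
  have hinj : Set.InjOn (Submodule.map (e : F →ₗ[ℝ] F)) Hyp := fun a _ b _ hab =>
    Submodule.map_injective_of_injective e.injective hab
  have hbij := (hfin.injOn_iff_bijOn_of_mapsTo hstab).mp hinj
  intro h' hh'
  obtain ⟨h, hh, hhe⟩ := hbij.surjOn hh'
  exact ⟨h, hh, hhe⟩

/-- Equivariance of the separating count. -/
lemma sepCount_map (L : Finset (F →ₗ[ℝ] ℝ)) (Hyp : Set (Submodule ℝ F))
    (hHyp : Hyp = {h | ∃ l ∈ L, h = ker l}) (e : F ≃ₗ[ℝ] F)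
    (hstab : ∀ h ∈ Hyp, Submodule.map (e : F →ₗ[ℝ] F) h ∈ Hyp) (σ τ : Set F) :
    sepCount Hyp (⇑e '' σ) (⇑e '' τ) = sepCount Hyp σ τ := by
  have hsurj := map_surjOn L Hyp hHyp e hstab
  have hsets : {h | h ∈ Hyp ∧ SeparatesSets h (⇑e '' σ) (⇑e '' τ)} =
      (Submodule.map (e : F →ₗ[ℝ] F)) '' {h | h ∈ Hyp ∧ SeparatesSets h σ τ} := by
    ext h'
    constructor
    · rintro ⟨hh', hsep⟩
      obtain ⟨h, hh, rfl⟩ := hsurj h' hh'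
      exact ⟨h, ⟨hh, (sep_map_iff e h σ τ).mp hsep⟩, rfl⟩
    · rintro ⟨h, ⟨hh, hsep⟩, rfl⟩
      exact ⟨hstab h hh, (sep_map_iff e h σ τ).mpr hsep⟩
  rw [sepCount, sepCount, hsets]
  exact Set.ncard_image_of_injOn fun a _ b _ hab =>
    Submodule.map_injective_of_injective e.injective hab

/-- The image of the complement under a stabilizing equivalence stays in the complement. -/
lemma compl_image (L : Finset (F →ₗ[ℝ] ℝ)) (Hyp : Set (Submodule ℝ F))
    (hHyp : Hyp = {h | ∃ l ∈ L, h = ker l}) (e : F ≃ₗ[ℝ] F)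
    (hstab : ∀ h ∈ Hyp, Submodule.map (e : F →ₗ[ℝ] F) h ∈ Hyp) :
    ∀ x ∈ arrComplement Hyp, e x ∈ arrComplement Hyp := by
  intro x hx h' hh' hmem
  obtain ⟨h, hh, rfl⟩ := map_surjOn L Hyp hHyp e hstab h' hh'
  obtain ⟨w, hw, hwe⟩ := hmem
  have : w = x := e.injective hwe
  exact hx h hh (this ▸ hw)

/-- Images of pre-chambers are pre-chambers. -/
lemma pre_image (L : Finset (F →ₗ[ℝ] ℝ)) (Hyp : Set (Submodule ℝ F))
    (hHyp : Hyp = {h | ∃ l ∈ L, h = ker l}) (e : F ≃ₗ[ℝ] F)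
    (hstab : ∀ h ∈ Hyp, Submodule.map (e : F →ₗ[ℝ] F) h ∈ Hyp)
    {σ : Set F} (hσ : PreCh Hyp σ) : PreCh Hyp (⇑e '' σ) := by
  have hcont : Continuous (⇑e) := by
    have := (e : F →ₗ[ℝ] F).continuous_of_finiteDimensional
    rwa [LinearEquiv.coe_coe] at this
  refine ⟨hσ.1.image _ hcont.continuousOn, ?_⟩
  rintro _ ⟨x, hxσ, rfl⟩
  exact compl_image L Hyp hHyp e hstab x (hσ.2 hxσ)

end Aux

/-- Well-definedness of the cotangent sign representation: for a finite group
`W` acting linearly on a finite-dimensional real vector space `F` preserving a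
finite central hyperplane arrangement with nonempty complement, and a chamber
`σ`, the function `g ↦ (−1)^{d(σ, g·σ)}` is a group homomorphism, independent
of the choice of chamber `σ`. -/
theorem stmt9
    {F : Type*} [NormedAddCommGroup F] [NormedSpace ℝ F]
    [FiniteDimensional ℝ F]
    (W : Type*) [Group W] [Finite W] (ρ : W →* (F ≃ₗ[ℝ] F))
    (L : Finset (F →ₗ[ℝ] ℝ)) (hL : ∀ l ∈ L, l ≠ 0)
    (Hyp : Set (Submodule ℝ F))
    (hHyp : Hyp = {h | ∃ l ∈ L, h = LinearMap.ker l})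
    (hstable : ∀ g : W, ∀ h ∈ Hyp,
      Submodule.map ((ρ g : F ≃ₗ[ℝ] F) : F →ₗ[ℝ] F) h ∈ Hyp)
    (hne : (arrComplement Hyp).Nonempty)
    (σ : Set F) (hσ : IsChamber Hyp σ) :
    (∀ g h : W,
      ((-1 : ℤ) ^ sepCount Hyp σ (⇑(ρ (g * h)) '' σ)) =
        ((-1 : ℤ) ^ sepCount Hyp σ (⇑(ρ g) '' σ)) *
          ((-1 : ℤ) ^ sepCount Hyp σ (⇑(ρ h) '' σ))) ∧
    (∀ τ : Set F, IsChamber Hyp τ → ∀ g : W,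
      ((-1 : ℤ) ^ sepCount Hyp σ (⇑(ρ g) '' σ)) =
        ((-1 : ℤ) ^ sepCount Hyp τ (⇑(ρ g) '' τ))) := by
  classical
  -- basic facts about chambers
  have chamber_pre : ∀ υ : Set F, IsChamber Hyp υ → PreCh Hyp υ ∧ υ.Nonempty := by
    rintro υ ⟨x, hxc, rfl⟩
    exact ⟨⟨isPreconnected_connectedComponentIn, connectedComponentIn_subset _ _⟩,
      ⟨x, mem_connectedComponentIn hxc⟩⟩
  obtain ⟨hσpre, x0, hx0⟩ := chamber_pre σ hσ
  have himg : ∀ (g : W) (υ : Set F), PreCh Hyp υ → PreCh Hyp (⇑(ρ g) '' υ) :=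
    fun g υ hυ => pre_image L Hyp hHyp (ρ g) (hstable g) hυ
  have hmulco : ∀ (g h : W) (υ : Set F), ⇑(ρ (g * h)) '' υ = ⇑(ρ g) '' (⇑(ρ h) '' υ) := by
    intro g h υ
    rw [map_mul, ← Set.image_comp]
    rfl
  have hmulpt : ∀ (g h : W) (x : F), (ρ (g * h)) x = (ρ g) ((ρ h) x) := by
    intro g h x
    rw [map_mul]
    rfl
  constructor
  · intro g h
    have e1 : (-1 : ℤ) ^ sepCount Hyp σ (⇑(ρ (g * h)) '' σ) =
        Dprod L x0 ((ρ g) ((ρ h) x0)) := by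
      rw [hmulco g h σ]
      exact sign_eq L Hyp hHyp hσpre (himg g _ (himg h _ hσpre)) hx0
        (Set.mem_image_of_mem _ (Set.mem_image_of_mem _ hx0))
    have e2 : (-1 : ℤ) ^ sepCount Hyp σ (⇑(ρ g) '' σ) = Dprod L x0 ((ρ g) x0) :=
      sign_eq L Hyp hHyp hσpre (himg g _ hσpre) hx0 (Set.mem_image_of_mem _ hx0)
    have e3 : (-1 : ℤ) ^ sepCount Hyp σ (⇑(ρ h) '' σ) = Dprod L x0 ((ρ h) x0) :=
      sign_eq L Hyp hHyp hσpre (himg h _ hσpre) hx0 (Set.mem_image_of_mem _ hx0)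
    have e4 : (-1 : ℤ) ^ sepCount Hyp σ (⇑(ρ h) '' σ) =
        Dprod L ((ρ g) x0) ((ρ g) ((ρ h) x0)) := by
      rw [← sepCount_map L Hyp hHyp (ρ g) (hstable g) σ (⇑(ρ h) '' σ)]
      exact sign_eq L Hyp hHyp (himg g _ hσpre) (himg g _ (himg h _ hσpre))
        (Set.mem_image_of_mem _ hx0)
        (Set.mem_image_of_mem _ (Set.mem_image_of_mem _ hx0))
    have heq : Dprod L x0 ((ρ h) x0) = Dprod L ((ρ g) x0) ((ρ g) ((ρ h) x0)) :=
      e3.symm.trans e4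
    rw [e1, e2, e3, heq, Dprod_trans]
  · intro τ hτ g
    obtain ⟨hτpre, y0, hy0⟩ := chamber_pre τ hτ
    have e1 : (-1 : ℤ) ^ sepCount Hyp σ (⇑(ρ g) '' σ) = Dprod L x0 ((ρ g) x0) :=
      sign_eq L Hyp hHyp hσpre (himg g _ hσpre) hx0 (Set.mem_image_of_mem _ hx0)
    have e2 : (-1 : ℤ) ^ sepCount Hyp τ (⇑(ρ g) '' τ) = Dprod L y0 ((ρ g) y0) :=
      sign_eq L Hyp hHyp hτpre (himg g _ hτpre) hy0 (Set.mem_image_of_mem _ hy0)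
    have e3 : Dprod L ((ρ g) y0) ((ρ g) x0) = Dprod L y0 x0 := by
      have a1 : (-1 : ℤ) ^ sepCount Hyp (⇑(ρ g) '' τ) (⇑(ρ g) '' σ) =
          Dprod L ((ρ g) y0) ((ρ g) x0) :=
        sign_eq L Hyp hHyp (himg g _ hτpre) (himg g _ hσpre)
          (Set.mem_image_of_mem _ hy0) (Set.mem_image_of_mem _ hx0)
      have a2 : (-1 : ℤ) ^ sepCount Hyp τ σ = Dprod L y0 x0 :=
        sign_eq L Hyp hHyp hτpre hσpre hy0 hx0
      rw [← a1, sepCount_map L Hyp hHyp (ρ g) (hstable g) τ σ, a2]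
    rw [e1, e2]
    have t1 : Dprod L x0 y0 * Dprod L y0 ((ρ g) y0) = Dprod L x0 ((ρ g) y0) :=
      Dprod_trans _ _ _ _
    have t2 : Dprod L x0 ((ρ g) y0) * Dprod L ((ρ g) y0) ((ρ g) x0) =
        Dprod L x0 ((ρ g) x0) := Dprod_trans _ _ _ _
    have t3 : Dprod L x0 y0 * Dprod L y0 x0 = Dprod L x0 x0 := Dprod_trans _ _ _ _
    have t4 : Dprod L x0 x0 = 1 := Dprod_self _ _
    calc Dprod L x0 ((ρ g) x0)
        = Dprod L x0 ((ρ g) y0) * Dprod L ((ρ g) y0) ((ρ g) x0) := t2.symm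
      _ = (Dprod L x0 y0 * Dprod L y0 ((ρ g) y0)) * Dprod L y0 x0 := by rw [t1, e3]
      _ = Dprod L y0 ((ρ g) y0) * (Dprod L x0 y0 * Dprod L y0 x0) := by ring
      _ = Dprod L y0 ((ρ g) y0) := by rw [t3, t4, mul_one]
end
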